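/- arXiv:1107.4680 — 3 statements merged into one kernel-verified Lean document; each statement's English description precedes it below -/
import Mathlib

section
/- For each m ∈ ℕ, the intertwining identity (πz − ∂_{z̄})^m = e^{-Δ_z/(4π)} (πz)^m e^{Δ_z/(4π)} holds as operators on polynomials in z and z̄, where Δ_z = 4∂_{z̄}∂_z; similarly (π z̄ − ∂_z)^m = e^{-Δ_z/(4π)} (π z̄)^m e^{Δ_z/(4π)}. -/
open MvPolynomial Real

noncomputable section

/-- Polynomials in the two commuting variables `z` (index `0`) and `z̄` (index `1`). -/
abbrev P2 : Type := MvPolynomial (Fin 2) ℂ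

/-- Formal Wirtinger derivative `∂_z`. -/
noncomputable def Dz : Module.End ℂ P2 := (pderiv (0 : Fin 2)).toLinearMap

/-- Formal Wirtinger derivative `∂_z̄`. -/
noncomputable def Dzb : Module.End ℂ P2 := (pderiv (1 : Fin 2)).toLinearMap

/-- Multiplication by `z`. -/
noncomputable def mulZ : Module.End ℂ P2 := LinearMap.mulLeft ℂ (X 0)

/-- Multiplication by `z̄`. -/
noncomputable def mulZb : Module.End ℂ P2 := LinearMap.mulLeft ℂ (X 1)

/-- The Laplacian `Δ_z = 4 ∂_z̄ ∂_z`. -/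
noncomputable def Δz : Module.End ℂ P2 := (4 : ℂ) • (Dzb ∘ₗ Dz)

/-- `e^{cΔ_z}` applied to a polynomial: a finite sum since `Δ_z` is locally nilpotent. -/
noncomputable def expDelta (c : ℂ) (p : P2) : P2 :=
  ∑ l ∈ Finset.range (p.totalDegree + 1), (c ^ l / (l.factorial : ℂ)) • ((Δz ^ l) p)

/-- `Φ_{j,k}(z,z̄) = (π^j j!)^{-1/2} Σ_{l=0}^j C(j,l) (-π z̄)^{j-l} ∂_z^l ((π^k/k!)^{1/2} z^k)`. -/
noncomputable def PhiJK (j k : ℕ) : P2 :=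
  ((Real.sqrt (π ^ j * j.factorial) : ℂ))⁻¹ •
    ∑ l ∈ Finset.range (j + 1), (j.choose l : ℂ) •
      ((C (-(π : ℂ)) * X 1) ^ (j - l) *
        ((Dz ^ l) ((Real.sqrt (π ^ k / k.factorial) : ℂ) • (X 0) ^ k)))

end

/-!
On a polynomial `p` with `Δ_z^N p = 0` (e.g. `N > deg p`), `expDelta c` is the polynomial
`trunc N (exp (c X))` evaluated at `Δ_z`; a product of two such truncations agrees with the truncated
product of power series below degree `N`, so `e^{-cΔ_z} e^{cΔ_z} = exp (0 X) = 1`.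

From `[Δ_z, z] = 4 ∂_z̄` with `∂_z̄` commuting with `Δ_z` one gets
`f(Δ_z) z = z f(Δ_z) + 4 ∂_z̄ f'(Δ_z)` for every polynomial `f`. Since `exp (c X)' = c exp (c X)`,
this gives `e^{-Δ_z/(4π)} (π z) = (π z - ∂_z̄) e^{-Δ_z/(4π)}`, and iterating this intertwining
relation gives the `m`-th powers. The case of `z̄` is the same with `[Δ_z, z̄] = 4 ∂_z`.
-/

open Finset

section Commutator

variable {R 𝒜 : Type*} [CommRing R] [Ring 𝒜] [Algebra R 𝒜] {T A D : 𝒜}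

theorem Polynomial.commute_aeval_of_commute (hTD : Commute T D) (f : Polynomial R) :
    Commute (Polynomial.aeval T f) D :=
  (Algebra.commute_of_mem_adjoin_singleton_of_commute
    (Polynomial.aeval_mem_adjoin_singleton R T) hTD.symm).symm

theorem Polynomial.aeval_mul_eq_mul_aeval_add_mul_aeval_derivative
    (hTA : T * A = A * T + D) (hTD : Commute T D) (f : Polynomial R) :
    Polynomial.aeval T f * A =
      A * Polynomial.aeval T f + D * Polynomial.aeval T (Polynomial.derivative f) := by
  induction f using Polynomial.induction_on with
  | C a =>
    simp only [Polynomial.aeval_C, Polynomial.derivative_C, map_zero, mul_zero, add_zero]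
    exact Algebra.commutes a A
  | add f g hf hg =>
    simp only [map_add, add_mul, mul_add, hf, hg]
    abel
  | monomial n a ih =>
    rw [pow_succ, ← mul_assoc]
    generalize Polynomial.C a * Polynomial.X ^ n = g at ih ⊢
    rw [Polynomial.derivative_mul, Polynomial.derivative_X, mul_one,
      map_add, map_mul, map_mul, Polynomial.aeval_X, mul_assoc, hTA, mul_add, ← mul_assoc, ih,
      (Polynomial.commute_aeval_of_commute hTD _).eq]
    noncomm_ring

end Commutator

section Exp

open PowerSeries

variable {R : Type*} [CommRing R] [Algebra ℚ R]

theorem PowerSeries.derivative_rescale_exp (c : R) :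
    d⁄dX R (rescale c (exp R)) = c • rescale c (exp R) := by
  ext n
  simp only [coeff_derivative, coeff_rescale, coeff_exp, coeff_smul, smul_eq_mul]
  have : (1 / ((n + 1).factorial : ℚ)) * (n + 1) = 1 / n.factorial := by
    rw [Nat.factorial_succ]; push_cast; field_simp
  rw [pow_succ, ← congrArg (algebraMap ℚ R) this, map_mul]
  push_cast
  ring

variable {𝒜 : Type*} [Ring 𝒜] [Algebra R 𝒜] {T A D : 𝒜}

theorem PowerSeries.aeval_trunc_rescale_exp_mul (hTA : T * A = A * T + D) (hTD : Commute T D)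
    (c : R) (N : ℕ) :
    Polynomial.aeval T (trunc (N + 1) (rescale c (exp R))) * A =
      A * Polynomial.aeval T (trunc (N + 1) (rescale c (exp R))) +
        c • (D * Polynomial.aeval T (trunc N (rescale c (exp R)))) := by
  rw [Polynomial.aeval_mul_eq_mul_aeval_add_mul_aeval_derivative hTA hTD, ← trunc_derivative,
    derivative_rescale_exp, map_smul, map_smul, mul_smul_comm]

end Exp

section LocallyNilpotent

open PowerSeries

variable {R M : Type*} [CommRing R] [AddCommGroup M] [Module R M] {T : Module.End R M}
  {N : ℕ} {p : M}

theorem Module.End.aeval_apply_eq_sum_range (hp : (T ^ N) p = 0) (f : Polynomial R) :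
    Polynomial.aeval T f p = ∑ n ∈ range N, f.coeff n • (T ^ n) p := by
  rw [Polynomial.aeval_eq_sum_range' (Nat.lt_succ_of_le (le_max_left f.natDegree N)),
    LinearMap.sum_apply]
  refine (sum_subset (range_subset_range.2 (Nat.le_succ_of_le (le_max_right _ _)))
    fun n _ hn => ?_).symm
  rw [LinearMap.smul_apply, pow_map_zero_of_le (not_lt.1 (mem_range.not.1 hn)) hp, smul_zero]

theorem Module.End.pow_apply_aeval_eq_zero (hp : (T ^ N) p = 0) (f : Polynomial R) :
    (T ^ N) (Polynomial.aeval T f p) = 0 := by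
  rw [← Module.End.mul_apply, ← Polynomial.aeval_X_pow (R := R), ← map_mul, mul_comm, map_mul,
    Polynomial.aeval_X_pow, Module.End.mul_apply, hp, map_zero]

theorem Module.End.aeval_trunc_apply_of_le (hp : (T ^ N) p = 0) {N' : ℕ} (hN : N ≤ N')
    (F : PowerSeries R) :
    Polynomial.aeval T (trunc N' F) p = Polynomial.aeval T (trunc N F) p := by
  rw [aeval_apply_eq_sum_range hp, aeval_apply_eq_sum_range hp]
  refine sum_congr rfl fun n hn => ?_
  have hn : n < N := mem_range.1 hn
  rw [coeff_trunc, coeff_trunc, if_pos (hn.trans_le hN), if_pos hn]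

theorem Module.End.aeval_trunc_apply_aeval_trunc_apply (hp : (T ^ N) p = 0) (F G : PowerSeries R) :
    Polynomial.aeval T (trunc N F) (Polynomial.aeval T (trunc N G) p) =
      Polynomial.aeval T (trunc N (F * G)) p := by
  rw [← Module.End.mul_apply, ← map_mul, aeval_apply_eq_sum_range hp,
    aeval_apply_eq_sum_range hp]
  refine sum_congr rfl fun n hn => ?_
  rw [← trunc_trunc_mul_trunc, coeff_trunc, if_pos (mem_range.1 hn), ← Polynomial.coe_mul,
    Polynomial.coeff_coe]

theorem Module.End.aeval_trunc_rescale_exp_neg_apply [Algebra ℚ R] (hp : (T ^ N) p = 0) (c : R) :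
    Polynomial.aeval T (trunc N (rescale (-c) (exp R)))
      (Polynomial.aeval T (trunc N (rescale c (exp R))) p) = p := by
  rw [aeval_trunc_apply_aeval_trunc_apply hp, exp_mul_exp_eq_exp_add, neg_add_cancel, rescale_zero,
    RingHom.comp_apply, constantCoeff_exp, map_one]
  cases N with
  | zero => simpa using hp.symm
  | succ N => rw [trunc_one, map_one, Module.End.one_apply]

end LocallyNilpotent

section Wirtinger

theorem MvPolynomial.pderiv_comm {σ R : Type*} [CommRing R] (i j : σ) (p : MvPolynomial σ R) :
    pderiv i (pderiv j p) = pderiv j (pderiv i p) := by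
  classical
  have h : ⁅pderiv i, pderiv j⁆ = (0 : Derivation R (MvPolynomial σ R) (MvPolynomial σ R)) :=
    derivation_ext fun k => by
      rw [Derivation.commutator_apply, pderiv_X, pderiv_X, Derivation.zero_apply]
      simp only [Pi.single_apply]
      split_ifs <;> simp
  have hp := DFunLike.congr_fun h p
  rwa [Derivation.commutator_apply, Derivation.zero_apply, sub_eq_zero] at hp

theorem MvPolynomial.IsHomogeneous.pow_pderiv_apply_eq_zero {σ R : Type*} [CommSemiring R]
    (i : σ) {φ : MvPolynomial σ R} {n N : ℕ} (hφ : φ.IsHomogeneous n) (hn : n < N) :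
    ((pderiv i).toLinearMap ^ N) φ = 0 := by
  induction N generalizing φ n with
  | zero => omega
  | succ N ih =>
    rw [pow_succ, Module.End.mul_apply, Derivation.coeFn_coe]
    rcases n with _ | n
    · rw [totalDegree_eq_zero_iff_eq_C.1 (Nat.le_zero.1 hφ.totalDegree_le), pderiv_C, map_zero]
    · exact ih hφ.pderiv (by omega)

theorem MvPolynomial.pow_pderiv_apply_eq_zero {σ R : Type*} [CommSemiring R] (i : σ)
    {p : MvPolynomial σ R} {N : ℕ} (hp : p.totalDegree < N) :
    ((pderiv i).toLinearMap ^ N) p = 0 := by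
  rw [← sum_homogeneousComponent p, map_sum]
  exact sum_eq_zero fun n hn => (homogeneousComponent_isHomogeneous n p).pow_pderiv_apply_eq_zero
    i (by have := mem_range.1 hn; omega)

theorem commute_Dzb_Dz : Commute Dzb Dz :=
  LinearMap.ext fun p => pderiv_comm 1 0 p

theorem Δz_pow_apply_eq_zero {p : P2} {N : ℕ} (hp : p.totalDegree < N) : (Δz ^ N) p = 0 := by
  rw [Δz, ← Module.End.mul_eq_comp, smul_pow, commute_Dzb_Dz.mul_pow, LinearMap.smul_apply,
    Module.End.mul_apply, Dz, pow_pderiv_apply_eq_zero 0 hp, map_zero, smul_zero]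

theorem commute_Δz_Dzb : Commute Δz Dzb := by
  refine LinearMap.ext fun p => ?_
  simp only [Δz, Dz, Dzb, Module.End.mul_apply, LinearMap.smul_apply, LinearMap.comp_apply,
    Derivation.coeFn_coe, map_smul, pderiv_comm 1 0 p]

theorem commute_Δz_Dz : Commute Δz Dz := by
  refine LinearMap.ext fun p => ?_
  simp only [Δz, Dz, Dzb, Module.End.mul_apply, LinearMap.smul_apply, LinearMap.comp_apply,
    Derivation.coeFn_coe, map_smul, pderiv_comm 0 1 (pderiv 0 p)]

theorem Δz_mul_mulZ : Δz * mulZ = mulZ * Δz + (4 : ℂ) • Dzb := by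
  refine LinearMap.ext fun p => ?_
  change (4 : ℂ) • pderiv 1 (pderiv 0 (X 0 * p)) =
    X 0 * ((4 : ℂ) • pderiv 1 (pderiv 0 p)) + (4 : ℂ) • pderiv 1 p
  rw [pderiv_mul, pderiv_X_self, one_mul, map_add, pderiv_mul,
    pderiv_X_of_ne (by decide : (0 : Fin 2) ≠ 1), zero_mul, zero_add, smul_add, mul_smul_comm,
    add_comm]

theorem Δz_mul_mulZb : Δz * mulZb = mulZb * Δz + (4 : ℂ) • Dz := by
  refine LinearMap.ext fun p => ?_
  change (4 : ℂ) • pderiv 1 (pderiv 0 (X 1 * p)) =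
    X 1 * ((4 : ℂ) • pderiv 1 (pderiv 0 p)) + (4 : ℂ) • pderiv 0 p
  rw [pderiv_mul, pderiv_X_of_ne (by decide : (1 : Fin 2) ≠ 0), zero_mul, zero_add, pderiv_mul,
    pderiv_X_self, one_mul, smul_add, mul_smul_comm, add_comm]

end Wirtinger

section ExpDelta

open PowerSeries (trunc rescale exp)

theorem expDelta_eq_aeval_trunc (c : ℂ) {p : P2} {N : ℕ} (hp : (Δz ^ N) p = 0) :
    expDelta c p = Polynomial.aeval Δz (trunc N (rescale c (exp ℂ))) p := by
  have hdeg : (Δz ^ (p.totalDegree + 1)) p = 0 := Δz_pow_apply_eq_zero (Nat.lt_succ_self _)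
  have hsum : expDelta c p =
      Polynomial.aeval Δz (trunc (p.totalDegree + 1) (rescale c (exp ℂ))) p := by
    rw [Module.End.aeval_apply_eq_sum_range hdeg, expDelta]
    refine sum_congr rfl fun n hn => ?_
    rw [PowerSeries.coeff_trunc, if_pos (mem_range.1 hn), PowerSeries.coeff_rescale,
      PowerSeries.coeff_exp]
    simp [div_eq_mul_inv]
  rw [hsum]
  rcases le_total N (p.totalDegree + 1) with h | h
  · exact Module.End.aeval_trunc_apply_of_le hp h _
  · exact (Module.End.aeval_trunc_apply_of_le hdeg h _).symm

theorem expDelta_neg_expDelta (c : ℂ) (p : P2) : expDelta (-c) (expDelta c p) = p := by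
  have hp : (Δz ^ (p.totalDegree + 1)) p = 0 := Δz_pow_apply_eq_zero (Nat.lt_succ_self _)
  rw [expDelta_eq_aeval_trunc c hp,
    expDelta_eq_aeval_trunc (-c) (Module.End.pow_apply_aeval_eq_zero hp _),
    Module.End.aeval_trunc_rescale_exp_neg_apply hp]

theorem expDelta_smul (c a : ℂ) (p : P2) : expDelta c (a • p) = a • expDelta c p := by
  have hp : (Δz ^ (p.totalDegree + 1)) p = 0 := Δz_pow_apply_eq_zero (Nat.lt_succ_self _)
  have hap : (Δz ^ (p.totalDegree + 1)) (a • p) = 0 := by rw [map_smul, hp, smul_zero]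
  rw [expDelta_eq_aeval_trunc c hap, map_smul, expDelta_eq_aeval_trunc c hp]

theorem expDelta_X_mul {i : Fin 2} {D : Module.End ℂ P2}
    (hΔ : Δz * LinearMap.mulLeft ℂ (X i) = LinearMap.mulLeft ℂ (X i) * Δz + D)
    (hD : Commute Δz D) (c : ℂ) (q : P2) :
    expDelta c (X i * q) = X i * expDelta c q + c • D (expDelta c q) := by
  set N := q.totalDegree + 1
  have hq : (Δz ^ N) q = 0 := Δz_pow_apply_eq_zero (Nat.lt_succ_self _)
  have hq' : (Δz ^ (N + 1)) q = 0 := Module.End.pow_map_zero_of_le N.le_succ hq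
  have hXq : (Δz ^ (N + 1)) (X i * q) = 0 := by
    refine Δz_pow_apply_eq_zero ((totalDegree_mul _ _).trans_lt ?_)
    rw [totalDegree_X]
    omega
  have key := LinearMap.congr_fun (PowerSeries.aeval_trunc_rescale_exp_mul hΔ hD c N) q
  simp only [Module.End.mul_apply, LinearMap.add_apply, LinearMap.smul_apply,
    LinearMap.mulLeft_apply] at key
  rw [expDelta_eq_aeval_trunc c hXq, key, ← expDelta_eq_aeval_trunc c hq',
    ← expDelta_eq_aeval_trunc c hq]

theorem pow_apply_eq_expDelta_conj {i : Fin 2} {D : Module.End ℂ P2}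
    (hΔ : Δz * LinearMap.mulLeft ℂ (X i) = LinearMap.mulLeft ℂ (X i) * Δz + (4 : ℂ) • D)
    (hD : Commute Δz D) (m : ℕ) (p : P2) :
    (((π : ℂ) • LinearMap.mulLeft ℂ (X i) - D : Module.End ℂ P2) ^ m) p =
      expDelta (-(4 * (π : ℂ))⁻¹)
        ((((π : ℂ) • LinearMap.mulLeft ℂ (X i)) ^ m) (expDelta ((4 * (π : ℂ))⁻¹) p)) := by
  have hsemiconj : Function.Semiconj (expDelta (-(4 * (π : ℂ))⁻¹))
      ⇑((π : ℂ) • LinearMap.mulLeft ℂ (X i) : Module.End ℂ P2)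
      ⇑((π : ℂ) • LinearMap.mulLeft ℂ (X i) - D : Module.End ℂ P2) := by
    intro q
    simp only [LinearMap.sub_apply, LinearMap.smul_apply, LinearMap.mulLeft_apply]
    rw [expDelta_smul, expDelta_X_mul hΔ (hD.smul_right 4), smul_add, LinearMap.smul_apply,
      smul_smul, smul_smul, show (π : ℂ) * -(4 * (π : ℂ))⁻¹ * 4 = -1 by field_simp,
      neg_one_smul, sub_eq_add_neg]
  rw [Module.End.pow_apply, Module.End.pow_apply, hsemiconj.iterate_right m,
    expDelta_neg_expDelta]

end ExpDelta

/-- `(πz - ∂_z̄)^m = e^{-Δ_z/(4π)} (πz)^m e^{Δ_z/(4π)}` and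
`(πz̄ - ∂_z)^m = e^{-Δ_z/(4π)} (πz̄)^m e^{Δ_z/(4π)}` as operators on `ℂ[z,z̄]`. -/
theorem intertwining_identity (m : ℕ) :
    (∀ p : P2, ((((π : ℂ) • mulZ - Dzb) ^ m) p)
        = expDelta (-(4 * (π : ℂ))⁻¹) (((((π : ℂ) • mulZ) ^ m)) (expDelta ((4 * (π : ℂ))⁻¹) p))) ∧
    (∀ p : P2, ((((π : ℂ) • mulZb - Dz) ^ m) p)
        = expDelta (-(4 * (π : ℂ))⁻¹) (((((π : ℂ) • mulZb) ^ m)) (expDelta ((4 * (π : ℂ))⁻¹) p))) :=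
  ⟨pow_apply_eq_expDelta_conj Δz_mul_mulZ commute_Δz_Dzb m,
    pow_apply_eq_expDelta_conj Δz_mul_mulZb commute_Δz_Dz m⟩
end

section
/- Define Φ_k(z) = (π^k/k!)^{1/2} z^k and Φ_{j,k}(z, z̄) = (π^j j!)^{-1/2} Σ_{l=0}^{j} C(j,l) (−π z̄)^{j−l} ∂_z^l Φ_k(z). Then Φ_{j,k}(z, z̄) = e^{-Δ_z/(4π)} ( Φ_j(−z̄) Φ_k(z) ), where e^{-Δ_z/(4π)} = Σ_{l≥0} (−1)^l (4π)^{-l} Δ_z^l / l! (a finite sum on polynomials) and Δ_z = 4∂_{z̄}∂_z. -/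
/-
Both sides are combinations of the monomials `z̄ ^ (j - l) * z ^ (k - l)`, `l ≤ j`. Since `∂_z` and
`∂_z̄` act on `z̄ ^ a * z ^ b` by lowering one exponent, `Δ_z ^ l` sends it to
`4 ^ l a^{(l)} b^{(l)} z̄ ^ (a - l) * z ^ (b - l)` (falling factorials), so the exponential series
applied to `z̄ ^ j * z ^ k` stops at `l = j`. Its `l`-th term matches the `l`-th term of `Φ_{j,k}`
because `j^{(l)} / l! = C(j, l)` and `(π^j j!)^{1/2} (π^j/j!)^{1/2} = π^j`.
-/

open MvPolynomial Real

/-- `Φ_k(z) = (π^k/k!)^{1/2} z^k` as a polynomial in `z`. -/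
noncomputable def PhiK (k : ℕ) : P2 :=
  (Real.sqrt (π ^ k / k.factorial) : ℂ) • (X 0) ^ k

/-- `Φ_j(-z̄)`: the polynomial `Φ_j` evaluated at `-z̄`. -/
noncomputable def PhiKbarNeg (j : ℕ) : P2 :=
  (Real.sqrt (π ^ j / j.factorial) : ℂ) • (-(X 1 : P2)) ^ j

namespace MvPolynomial

variable {σ : Type*}

theorem pderiv_mul_X_pow {R : Type*} [CommSemiring R] {i : σ} {p : MvPolynomial σ R}
    (hp : pderiv i p = 0) (n : ℕ) : pderiv i (p * X i ^ n) = n • (p * X i ^ (n - 1)) := by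
  rw [pderiv_mul, hp, zero_mul, zero_add, pderiv_pow, pderiv_X_self, mul_one, nsmul_eq_mul]
  ring

theorem totalDegree_smul_of_ne_zero {K : Type*} [Field K] {a : K} (ha : a ≠ 0)
    (p : MvPolynomial σ K) : (a • p).totalDegree = p.totalDegree := by
  rw [totalDegree, support_smul_eq ha, totalDegree]

theorem totalDegree_X_pow_mul_X_pow {R : Type*} [CommRing R] [IsDomain R] (i i' : σ) (a b : ℕ) :
    (X i ^ a * X i' ^ b : MvPolynomial σ R).totalDegree = a + b := by
  rw [totalDegree_mul_of_isDomain (pow_ne_zero _ (X_ne_zero _)) (pow_ne_zero _ (X_ne_zero _)),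
    totalDegree_X_pow, totalDegree_X_pow]

end MvPolynomial

theorem Real.sqrt_mul_mul_sqrt_div {x y : ℝ} (hx : 0 ≤ x) (hy : 0 < y) :
    √(x * y) * √(x / y) = x := by
  rw [← Real.sqrt_mul (by positivity), show x * y * (x / y) = x ^ 2 by field_simp,
    Real.sqrt_sq hx]

lemma Dz_X_pow_mul_X_pow (a b : ℕ) :
    Dz ((X 1 : P2) ^ a * X 0 ^ b) = (b : ℂ) • ((X 1 : P2) ^ a * X 0 ^ (b - 1)) := by
  have h : pderiv 0 ((X 1 : P2) ^ a) = 0 := by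
    rw [pderiv_pow, pderiv_X_of_ne one_ne_zero, mul_zero]
  rw [Dz, Derivation.coeFn_coe, pderiv_mul_X_pow h, Nat.cast_smul_eq_nsmul]

lemma Dzb_X_pow_mul_X_pow (a b : ℕ) :
    Dzb ((X 1 : P2) ^ a * X 0 ^ b) = (a : ℂ) • ((X 1 : P2) ^ (a - 1) * X 0 ^ b) := by
  have h : pderiv 1 ((X 0 : P2) ^ b) = 0 := by
    rw [pderiv_pow, pderiv_X_of_ne zero_ne_one, mul_zero]
  rw [Dzb, Derivation.coeFn_coe, mul_comm, pderiv_mul_X_pow h, Nat.cast_smul_eq_nsmul,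
    mul_comm]

lemma Dz_pow_X_pow_mul_X_pow (l a b : ℕ) :
    (Dz ^ l) ((X 1 : P2) ^ a * X 0 ^ b) =
      (b.descFactorial l : ℂ) • ((X 1 : P2) ^ a * X 0 ^ (b - l)) := by
  induction l with
  | zero => simp
  | succ l ih =>
    rw [pow_succ', Module.End.mul_apply, ih, map_smul, Dz_X_pow_mul_X_pow, smul_smul,
      Nat.descFactorial_succ, Nat.sub_sub, Nat.cast_mul, mul_comm]

lemma Δz_X_pow_mul_X_pow (a b : ℕ) :
    Δz ((X 1 : P2) ^ a * X 0 ^ b) =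
      (4 * a * b : ℂ) • ((X 1 : P2) ^ (a - 1) * X 0 ^ (b - 1)) := by
  rw [Δz, LinearMap.smul_apply, LinearMap.comp_apply, Dz_X_pow_mul_X_pow, map_smul,
    Dzb_X_pow_mul_X_pow, smul_smul, smul_smul, mul_right_comm]

lemma Δz_pow_X_pow_mul_X_pow (l a b : ℕ) :
    (Δz ^ l) ((X 1 : P2) ^ a * X 0 ^ b) =
      (4 ^ l * a.descFactorial l * b.descFactorial l : ℂ) •
        ((X 1 : P2) ^ (a - l) * X 0 ^ (b - l)) := by
  induction l with
  | zero => simp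
  | succ l ih =>
    rw [pow_succ', Module.End.mul_apply, ih, map_smul, Δz_X_pow_mul_X_pow, smul_smul,
      Nat.sub_sub, Nat.sub_sub, Nat.descFactorial_succ, Nat.descFactorial_succ]
    push_cast
    ring_nf

lemma expDelta_eq_sum_range {c : ℂ} {p : P2} {N : ℕ} (hN : N ≤ p.totalDegree)
    (hvanish : ∀ l, N < l → (Δz ^ l) p = 0) :
    expDelta c p = ∑ l ∈ Finset.range (N + 1), (c ^ l / l.factorial) • (Δz ^ l) p := by
  refine (Finset.sum_subset (Finset.range_subset_range.mpr (by omega)) fun l _ hl => ?_).symm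
  rw [hvanish l (by simpa using hl), smul_zero]

lemma PhiJK_eq_sum (j k : ℕ) :
    PhiJK j k = ∑ l ∈ Finset.range (j + 1),
      ((Real.sqrt (π ^ j * j.factorial) : ℂ)⁻¹ * (j.choose l * ((-π) ^ (j - l) *
        ((Real.sqrt (π ^ k / k.factorial) : ℂ) * k.descFactorial l)))) •
        ((X 1 : P2) ^ (j - l) * X 0 ^ (k - l)) := by
  rw [PhiJK, Finset.smul_sum]
  refine Finset.sum_congr rfl fun l _ => ?_
  rw [← one_mul ((X 0 : P2) ^ k), ← pow_zero (X 1 : P2), map_smul, Dz_pow_X_pow_mul_X_pow,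
    mul_pow, ← map_pow, ← smul_eq_C_mul, pow_zero, one_mul]
  simp only [smul_mul_assoc, mul_smul_comm, smul_smul]
  congr 1
  ring

lemma PhiKbarNeg_mul_PhiK (j k : ℕ) : PhiKbarNeg j * PhiK k =
    ((-1) ^ j * (Real.sqrt (π ^ j / j.factorial) : ℂ) * (Real.sqrt (π ^ k / k.factorial) : ℂ)) •
      ((X 1 : P2) ^ j * X 0 ^ k) := by
  have hneg : (-(X 1 : P2)) ^ j = ((-1 : ℂ) ^ j) • X 1 ^ j := by
    rw [neg_pow, smul_eq_C_mul, map_pow, map_neg, map_one]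
  rw [PhiKbarNeg, PhiK, hneg, smul_smul, smul_mul_smul_comm, mul_comm _ ((-1 : ℂ) ^ j)]

/-- The coefficient of `z̄ ^ (j - l) * z ^ (k - l)` on the two sides, up to the common factor
`(π^k/k!)^{1/2} k!/(k-l)!`; here `a * b = x ^ j` stands for `(π^j j!)^{1/2} (π^j/j!)^{1/2} = π^j`. -/
lemma inv_mul_choose_mul_neg_pow_eq {j l : ℕ} (hl : l ≤ j) {x a b : ℂ} (hx : x ≠ 0)
    (hab : a * b = x ^ j) :
    a⁻¹ * (j.choose l * (-x) ^ (j - l)) =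
      (-(4 * x)⁻¹) ^ l / l.factorial * ((-1) ^ j * b * (4 ^ l * j.descFactorial l)) := by
  obtain ⟨m, rfl⟩ := Nat.exists_eq_add_of_le hl
  have ha : a ≠ 0 := left_ne_zero_of_mul (hab ▸ pow_ne_zero _ hx)
  have hb : b = a⁻¹ * x ^ (l + m) := by rw [← hab, inv_mul_cancel_left₀ ha]
  have hfac : (l.factorial : ℂ) ≠ 0 := Nat.cast_ne_zero.mpr l.factorial_ne_zero
  have hsign : ((-1 : ℂ) ^ l) ^ 2 = 1 := by
    rw [← pow_mul, mul_comm, pow_mul, neg_one_sq, one_pow]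
  rw [hb, Nat.add_sub_cancel_left, Nat.descFactorial_eq_factorial_mul_choose, Nat.cast_mul,
    neg_pow (4 * x)⁻¹, inv_pow, mul_pow, pow_add, neg_pow x]
  field_simp
  rw [hsign]
  ring

/-- `Φ_{j,k}(z,z̄) = e^{-Δ_z/(4π)} (Φ_j(-z̄) Φ_k(z))`. -/
theorem phiJK_eq_expDelta (j k : ℕ) :
    PhiJK j k = expDelta (-(4 * (π : ℂ))⁻¹) (PhiKbarNeg j * PhiK k) := by
  set cj : ℂ := (Real.sqrt (π ^ j / j.factorial) : ℂ)
  set ck : ℂ := (Real.sqrt (π ^ k / k.factorial) : ℂ)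
  set S : ℂ := (Real.sqrt (π ^ j * j.factorial) : ℂ)
  have hScj : S * cj = (π : ℂ) ^ j := by
    have h := Real.sqrt_mul_mul_sqrt_div (x := π ^ j) (y := j.factorial) (by positivity)
      (by positivity)
    simp only [S, cj]
    exact_mod_cast h
  have hA : (-1) ^ j * cj * ck ≠ 0 := by
    refine mul_ne_zero (mul_ne_zero (by simp) ?_) ?_ <;>
      exact Complex.ofReal_ne_zero.mpr (Real.sqrt_pos.mpr (by positivity)).ne'
  rw [PhiJK_eq_sum, PhiKbarNeg_mul_PhiK, expDelta_eq_sum_range (N := j)]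
  · refine Finset.sum_congr rfl fun l hl => ?_
    simp only [map_smul, Δz_pow_X_pow_mul_X_pow, smul_smul]
    congr 1
    linear_combination (ck * k.descFactorial l) *
      inv_mul_choose_mul_neg_pow_eq (Nat.lt_succ_iff.mp (Finset.mem_range.mp hl))
        (Complex.ofReal_ne_zero.mpr Real.pi_ne_zero) hScj
  · rw [totalDegree_smul_of_ne_zero hA, totalDegree_X_pow_mul_X_pow]
    omega
  · intro l hl
    rw [map_smul, Δz_pow_X_pow_mul_X_pow, Nat.descFactorial_eq_zero_iff_lt.mpr hl]
    simp
end

section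
/- The polyanalytic basis functions Φ_{j,k} satisfy the raising relations (√π z − (1/√π)∂_{z̄}) Φ_{j,k} = √(k+1) Φ_{j,k+1} and (√π z̄ − (1/√π)∂_z) Φ_{j,k} = −√(j+1) Φ_{j+1,k}. -/
open MvPolynomial Real

/-! Since `∂_z` commutes with multiplication by `z̄`, the binomial theorem turns the definition into
`Φ_{j,k} = (π^j j!)^{-1/2} (∂_z - π z̄)^j ((π^k/k!)^{1/2} z^k)`. Hence `∂_z - π z̄` raises `j`.
The operator `π z - ∂_z̄` commutes with `∂_z - π z̄` and acts on the holomorphic monomial `z^k` as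
multiplication by `π z`, so it raises `k`. In both cases the normalizing constants produce the
factor `√(π (n + 1))`, and dividing by `±√π` gives the two relations. -/

namespace MvPolynomial

variable {R σ : Type*}

theorem commute_pderiv_mulLeft [CommSemiring R] {i : σ} {a : MvPolynomial σ R}
    (ha : pderiv i a = 0) : Commute (pderiv i).toLinearMap (LinearMap.mulLeft R a) :=
  LinearMap.ext fun p => by simp [ha]

theorem pderiv_mul_mulLeft_X_self [CommSemiring R] (i : σ) :
    (pderiv i).toLinearMap * LinearMap.mulLeft R (X i : MvPolynomial σ R)
      = LinearMap.mulLeft R (X i) * (pderiv i).toLinearMap + 1 :=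
  LinearMap.ext fun p => by simp [add_comm]

theorem commute_pderiv_pderiv [CommRing R] (i j : σ) :
    Commute (pderiv (R := R) i).toLinearMap (pderiv (R := R) j).toLinearMap := by
  have h : ⁅pderiv (R := R) i, pderiv (R := R) j⁆ = 0 := by
    refine derivation_ext fun k => ?_
    rw [Derivation.commutator_apply]
    classical simp [Pi.single_apply, apply_ite]
  refine LinearMap.ext fun p => ?_
  have := congrArg (· p) h
  rw [Derivation.commutator_apply] at this
  simpa [sub_eq_zero] using this

end MvPolynomial

theorem Real.sqrt_pow_succ_mul_factorial_succ {x : ℝ} (hx : 0 ≤ x) (n : ℕ) :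
    √(x ^ (n + 1) * (n + 1).factorial) = √(x * (n + 1)) * √(x ^ n * n.factorial) := by
  rw [← Real.sqrt_mul (by positivity), Nat.factorial_succ]
  push_cast
  ring_nf

theorem Real.mul_sqrt_pow_div_factorial {x : ℝ} (hx : 0 ≤ x) (n : ℕ) :
    x * √(x ^ n / n.factorial) = √(x * (n + 1)) * √(x ^ (n + 1) / (n + 1).factorial) := by
  calc x * √(x ^ n / n.factorial) = √(x ^ 2 * (x ^ n / n.factorial)) := by
        rw [Real.sqrt_mul (sq_nonneg x), Real.sqrt_sq hx]
    _ = √(x * (n + 1) * (x ^ (n + 1) / (n + 1).factorial)) := by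
        congr 1
        rw [Nat.factorial_succ]
        push_cast
        field_simp
        ring
    _ = √(x * (n + 1)) * √(x ^ (n + 1) / (n + 1).factorial) := Real.sqrt_mul (by positivity) _

noncomputable def raiseJ : Module.End ℂ P2 := Dz - (π : ℂ) • mulZb

noncomputable def raiseK : Module.End ℂ P2 := (π : ℂ) • mulZ - Dzb

/- The commutators `[∂_z, z] = 1` and `[∂_z̄, z̄] = 1` enter with opposite signs. -/
theorem commute_raiseK_raiseJ : Commute raiseK raiseJ := by
  have h00 : Dz * mulZ = mulZ * Dz + 1 := pderiv_mul_mulLeft_X_self 0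
  have h11 : Dzb * mulZb = mulZb * Dzb + 1 := pderiv_mul_mulLeft_X_self 1
  have hD : Commute Dzb Dz := commute_pderiv_pderiv 1 0
  have hM : Commute mulZ mulZb := LinearMap.ext fun p => by simp [mulZ, mulZb, mul_left_comm]
  unfold Commute SemiconjBy raiseK raiseJ
  simp only [sub_mul, mul_sub, smul_mul_assoc, mul_smul_comm]
  rw [h00, h11, hD.eq, hM.eq]
  module

theorem PhiJK_eq_raiseJ_pow (j k : ℕ) :
    PhiJK j k = ((√(π ^ j * j.factorial) : ℝ) : ℂ)⁻¹ •
      (raiseJ ^ j) (((√(π ^ k / k.factorial) : ℝ) : ℂ) • (X 0 : P2) ^ k) := by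
  have hM : -((π : ℂ) • mulZb) = LinearMap.mulLeft ℂ (C (-(π : ℂ)) * X 1) := by
    refine LinearMap.ext fun p => ?_
    simp [mulZb, smul_eq_C_mul, mul_assoc]
  have hcomm : Commute Dz (LinearMap.mulLeft ℂ (C (-(π : ℂ)) * X 1)) :=
    commute_pderiv_mulLeft (by simp)
  rw [PhiJK, raiseJ, sub_eq_add_neg, hM, hcomm.add_pow, LinearMap.sum_apply]
  congr 1
  refine Finset.sum_congr rfl fun l _ => ?_
  rw [(hcomm.pow_pow _ _).eq, LinearMap.pow_mulLeft]
  simp only [Module.End.mul_apply, Module.End.natCast_apply, LinearMap.mulLeft_apply, map_nsmul,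
    Nat.cast_smul_eq_nsmul]

theorem raiseJ_PhiJK (j k : ℕ) :
    raiseJ (PhiJK j k) = ((√(π * (j + 1)) : ℝ) : ℂ) • PhiJK (j + 1) k := by
  rw [PhiJK_eq_raiseJ_pow, PhiJK_eq_raiseJ_pow, map_smul, ← Module.End.mul_apply, ← pow_succ',
    smul_smul, Real.sqrt_pow_succ_mul_factorial_succ pi_pos.le]
  have h : ((√(π * (j + 1)) : ℝ) : ℂ) ≠ 0 := Complex.ofReal_ne_zero.mpr (by positivity)
  push_cast
  field_simp

theorem raiseK_PhiJK (j k : ℕ) :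
    raiseK (PhiJK j k) = ((√(π * (k + 1)) : ℝ) : ℂ) • PhiJK j (k + 1) := by
  have hX : raiseK ((X 0 : P2) ^ k) = (π : ℂ) • X 0 ^ (k + 1) := by
    simp [raiseK, mulZ, Dzb, pow_succ']
  have hc : ((√(π ^ k / k.factorial) : ℝ) : ℂ) * π
      = ((√(π * (k + 1)) : ℝ) : ℂ) * ((√(π ^ (k + 1) / (k + 1).factorial) : ℝ) : ℂ) := by
    exact_mod_cast (mul_comm _ _).trans (Real.mul_sqrt_pow_div_factorial pi_pos.le k)
  rw [PhiJK_eq_raiseJ_pow, PhiJK_eq_raiseJ_pow, map_smul, ← Module.End.mul_apply,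
    (commute_raiseK_raiseJ.pow_right j).eq, Module.End.mul_apply, map_smul, hX, smul_smul, hc,
    mul_smul, map_smul, smul_comm]

/-- Raising relations:
`(√π z - (1/√π)∂_z̄) Φ_{j,k} = √(k+1) Φ_{j,k+1}` and
`(√π z̄ - (1/√π)∂_z) Φ_{j,k} = -√(j+1) Φ_{j+1,k}`. -/
theorem phiJK_raising (j k : ℕ) :
    ((Real.sqrt π : ℂ) • mulZ - ((Real.sqrt π : ℂ))⁻¹ • Dzb) (PhiJK j k)
        = (Real.sqrt (k + 1) : ℂ) • PhiJK j (k + 1) ∧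
    ((Real.sqrt π : ℂ) • mulZb - ((Real.sqrt π : ℂ))⁻¹ • Dz) (PhiJK j k)
        = -((Real.sqrt (j + 1) : ℂ)) • PhiJK (j + 1) k := by
  have h0 : ((√π : ℝ) : ℂ) ≠ 0 := Complex.ofReal_ne_zero.mpr (by positivity)
  have hπ : ((√π : ℝ) : ℂ)⁻¹ * π = √π := by
    rw [inv_mul_eq_iff_eq_mul₀ h0, ← Complex.ofReal_mul, Real.mul_self_sqrt pi_pos.le]
  have hscale (n : ℕ) : ((√π : ℝ) : ℂ)⁻¹ * ((√(π * (n + 1)) : ℝ) : ℂ) = ((√(n + 1) : ℝ) : ℂ) := by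
    rw [Real.sqrt_mul pi_pos.le, Complex.ofReal_mul, inv_mul_cancel_left₀ h0]
  have hK : ((√π : ℝ) : ℂ) • mulZ - ((√π : ℝ) : ℂ)⁻¹ • Dzb = ((√π : ℝ) : ℂ)⁻¹ • raiseK := by
    rw [raiseK, smul_sub, smul_smul, hπ]
  have hJ : ((√π : ℝ) : ℂ) • mulZb - ((√π : ℝ) : ℂ)⁻¹ • Dz = -((√π : ℝ) : ℂ)⁻¹ • raiseJ := by
    rw [raiseJ, smul_sub, smul_smul, neg_mul, hπ]
    module
  rw [hK, hJ, LinearMap.smul_apply, LinearMap.smul_apply, raiseK_PhiJK, raiseJ_PhiJK, smul_smul,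
    smul_smul, neg_mul, hscale, hscale]
  exact ⟨rfl, rfl⟩
end
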